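/- The function g : ℝ → ℝ defined by g(x) = −x + exp(−2·exp(x)) − exp(−2) is convex on the interval [ln(1/2), +∞). -/

import Mathlib

/-!
Up to the affine part `-x - e⁻²`, the function is `x ↦ exp (-c eˣ)` with `c = 2`, whose second
derivative `c eˣ exp (-c eˣ) (c eˣ - 1)` is nonnegative exactly where `c eˣ ≥ 1`, i.e. `x ≥ -log c`.
-/

open Real Set

theorem hasDerivAt_exp_neg_mul_exp (c x : ℝ) :
    HasDerivAt (fun x => exp (-c * exp x)) (-c * exp x * exp (-c * exp x)) x :=
  ((hasDerivAt_exp x).const_mul (-c)).exp.congr_deriv (mul_comm _ _)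

theorem hasDerivAt_neg_mul_exp_mul_exp_neg_mul_exp (c x : ℝ) :
    HasDerivAt (fun x => -c * exp x * exp (-c * exp x))
      (c * exp x * exp (-c * exp x) * (c * exp x - 1)) x :=
  (((hasDerivAt_exp x).const_mul (-c)).mul (hasDerivAt_exp_neg_mul_exp c x)).congr_deriv
    (by ring)

theorem convexOn_exp_neg_mul_exp {c : ℝ} (hc : 0 < c) :
    ConvexOn ℝ (Ici (-log c)) (fun x => exp (-c * exp x)) := by
  refine convexOn_of_hasDerivWithinAt2_nonneg (convex_Ici _) (by fun_prop)
    (fun x _ => (hasDerivAt_exp_neg_mul_exp c x).hasDerivWithinAt)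
    (fun x _ => (hasDerivAt_neg_mul_exp_mul_exp_neg_mul_exp c x).hasDerivWithinAt) ?_
  intro x hx
  rw [interior_Ici, mem_Ioi] at hx
  have hcx : 1 < c * exp x := by
    rw [← inv_lt_iff_one_lt_mul₀' hc, ← exp_log hc, ← exp_neg]
    exact exp_lt_exp.2 hx
  exact mul_nonneg (by positivity) (by linarith)

theorem stmt_18 :
    ConvexOn ℝ (Set.Ici (Real.log (1 / 2)))
      (fun x : ℝ => -x + Real.exp (-2 * Real.exp x) - Real.exp (-2)) := by
  rw [one_div, log_inv]
  simp_rw [sub_eq_add_neg]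
  exact ((concaveOn_id (convex_Ici _)).neg.add (convexOn_exp_neg_mul_exp two_pos)).add_const
    (-exp (-2))
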